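/- Let k ≥ 3 and B = {231, k(k−1)⋯21}. Then for every gap vector g = (g₁,g₂,g₃) ∈ ℕ³, Z(B;21;g) ≠ ∅ if and only if g₂ = 0 and g₁ ≤ k−3; equivalently, G(21) = Av((0,1,0),(k−2,0,0)) as a lower order ideal of ℕ³. -/

import Mathlib

/-- A permutation of arbitrary length: a length `n` together with a
bijection of `Fin n` (0-indexed positions and values). -/
abbrev PermAny : Type := Σ n : ℕ, Equiv.Perm (Fin n)

/-- `β` is contained as a pattern in `π`. -/
def ContainsPat {k n : ℕ} (β : Equiv.Perm (Fin k)) (π : Equiv.Perm (Fin n)) : Prop :=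
  ∃ f : Fin k → Fin n, StrictMono f ∧ ∀ a b : Fin k, β a < β b ↔ π (f a) < π (f b)

/-- `Av(B)`: the permutations avoiding every member of `B`. -/
def AvSet (B : Set PermAny) : Set PermAny :=
  {p | ∀ b ∈ B, ¬ ContainsPat b.2 p.2}

/-- A permutation class: closed downwards under pattern containment. -/
def IsPermClass (C : Set PermAny) : Prop :=
  ∀ p ∈ C, ∀ q : PermAny, ContainsPat q.2 p.2 → q ∈ C

/-- The positions `a,…,b` form an interval of `π`: the corresponding values
form a set of consecutive integers. -/
def IsIntervalAt {n : ℕ} (π : Equiv.Perm (Fin n)) (a b : Fin n) : Prop :=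
  a ≤ b ∧ ∃ c : ℕ,
    (Finset.Icc a b).image (fun i => (π i : ℕ)) = Finset.Icc c (c + ((b : ℕ) - (a : ℕ)))

/-- A permutation is simple when all of its intervals are trivial. -/
def IsSimplePerm {n : ℕ} (π : Equiv.Perm (Fin n)) : Prop :=
  ∀ a b : Fin n, IsIntervalAt π a b → a = b ∨ ((a : ℕ) = 0 ∧ (b : ℕ) = n - 1)

/-- `Z(B;π;g)`: the set of `B`-avoiding permutations of length `k + ‖g‖` whose
`k` smallest values occupy the positions prescribed by the gap vector `g`
and form the pattern `π`.  (0-indexed: entry `π r` sits at position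
`g 0 + ⋯ + g r + r`.) -/
def ZSet (B : Set PermAny) {k : ℕ} (π : Equiv.Perm (Fin k)) (g : Fin (k + 1) → ℕ) :
    Set (Equiv.Perm (Fin (k + ∑ j, g j))) :=
  {p | (⟨k + ∑ j, g j, p⟩ : PermAny) ∈ AvSet B ∧
    ∀ r : Fin k, ∀ i : Fin (k + ∑ j, g j),
      (i : ℕ) = (∑ j ∈ Finset.univ.filter fun j : Fin (k + 1) => (j : ℕ) ≤ (r : ℕ), g j)
          + (r : ℕ) →
      (p i : ℕ) = (π r : ℕ)}

/-- `J(π)`: the set of gap positions `j` such that `Z(B;π;g)` is empty whenever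
`g j > 0`. -/
def JSet (B : Set PermAny) {k : ℕ} (π : Equiv.Perm (Fin k)) : Set (Fin (k + 1)) :=
  {j | ∀ g : Fin (k + 1) → ℕ, 0 < g j → ZSet B π g = ∅}

/-- `d_r(π)`: delete the entry at position `r` from `π` and standardize. -/
def delEntry {k : ℕ} (π : Equiv.Perm (Fin (k + 1))) (r : Fin (k + 1)) : Equiv.Perm (Fin k) :=
  Equiv.removeNone ((finSuccEquiv' r).symm.trans (π.trans (finSuccEquiv' (π r))))

/-- `d_r(g)`: merge the gaps on either side of position `r`. -/
def delGap {k : ℕ} (g : Fin (k + 2) → ℕ) (r : Fin (k + 1)) : Fin (k + 1) → ℕ :=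
  fun j =>
    if (j : ℕ) < (r : ℕ) then g (Fin.castSucc j)
    else if (j : ℕ) = (r : ℕ) then g (Fin.castSucc j) + g j.succ
    else g j.succ

/-- The entry `π r` is ES-reducible for `π` with respect to `B`
(Zeilberger's original notion). -/
def ESRed (B : Set PermAny) {k : ℕ} (π : Equiv.Perm (Fin (k + 1))) (r : Fin (k + 1)) : Prop :=
  ∀ g : Fin (k + 2) → ℕ, (∀ j ∈ JSet B π, g j = 0) →
    (ZSet B π g).ncard = (ZSet B (delEntry π r) (delGap g r)).ncard

/-- The entry `π r` is ES⁺-reducible for `π` with respect to `B`. -/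
def ESPlusRed (B : Set PermAny) {k : ℕ} (π : Equiv.Perm (Fin (k + 1))) (r : Fin (k + 1)) : Prop :=
  ∀ g : Fin (k + 2) → ℕ, (ZSet B π g).Nonempty →
    (ZSet B π g).ncard = (ZSet B (delEntry π r) (delGap g r)).ncard

/-- `G_r(π)`: the largest lower order ideal of gap vectors `g` such that for all
`h ≤ g`, either `Z(B;π;h)` is nonempty or `Z(B;d_r(π);d_r(h))` is empty. -/
def GrSet (B : Set PermAny) {k : ℕ} (π : Equiv.Perm (Fin (k + 1))) (r : Fin (k + 1)) :
    Set (Fin (k + 2) → ℕ) :=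
  {g | ∀ h : Fin (k + 2) → ℕ, h ≤ g →
    (ZSet B π h).Nonempty ∨ ZSet B (delEntry π r) (delGap h r) = ∅}

noncomputable def p231 : Equiv.Perm (Fin 3) := Equiv.ofBijective ![1, 2, 0] (by decide)

/-! ### Auxiliary machinery -/

private def fnat (a i : ℕ) : ℕ :=
  if i < a then a + 1 - i else if i = a then 1 else if i = a + 1 then 0 else i

private lemma fnat_invol (a i : ℕ) : fnat a (fnat a i) = i := by
  unfold fnat; split_ifs <;> omega

private lemma fnat_lt (a n i : ℕ) (h : a + 2 ≤ n) (hi : i < n) : fnat a i < n := by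
  unfold fnat; split_ifs <;> omega

private lemma fnat_no231 (a i j l : ℕ) (hij : i < j) (hjl : j < l)
    (h1 : fnat a i < fnat a j) (h2 : fnat a l < fnat a i) : False := by
  unfold fnat at *; split_ifs at * <;> omega

private lemma fnat_big (a x : ℕ) (h : a + 2 ≤ x) : fnat a x = x := by
  unfold fnat; split_ifs <;> omega

private lemma fnat_at (a : ℕ) : fnat a a = 1 := by
  unfold fnat; split_ifs <;> omega

private lemma fnat_at1 (a : ℕ) : fnat a (a + 1) = 0 := by
  unfold fnat; split_ifs <;> omega

private def permOf (a n : ℕ) (h : a + 2 ≤ n) : Equiv.Perm (Fin n) where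
  toFun i := ⟨fnat a i, fnat_lt a n i h i.2⟩
  invFun i := ⟨fnat a i, fnat_lt a n i h i.2⟩
  left_inv i := by ext; simp [fnat_invol]
  right_inv i := by ext; simp [fnat_invol]

private lemma fin3_cases (a : Fin 3) : a = 0 ∨ a = 1 ∨ a = 2 := by omega

private lemma p231_val : ∀ a : Fin 3, (p231 a : ℕ) = ![1, 2, 0] a := by
  have h : ∀ a : Fin 3, p231 a = ![1, 2, 0] a := fun a => rfl
  intro a
  rcases fin3_cases a with h' | h' | h' <;> subst h' <;> rw [h] <;> rfl

private lemma contains231 {n : ℕ} (p : Equiv.Perm (Fin n)) (i j l : Fin n)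
    (hij : i < j) (hjl : j < l) (h1 : p i < p j) (h2 : p l < p i) :
    ContainsPat p231 p := by
  rw [Fin.lt_def] at hij hjl h1 h2
  refine ⟨fun a => if a = 0 then i else if a = 1 then j else l, ?_, ?_⟩
  · intro a b hab
    rw [Fin.lt_def]
    rcases fin3_cases a with ha | ha | ha <;> rcases fin3_cases b with hb | hb | hb <;>
      subst ha <;> subst hb <;> simp_all <;> rw [Fin.lt_def] <;> omega
  · intro a b
    have hva := p231_val a; have hvb := p231_val b
    rw [Fin.lt_def, Fin.lt_def, hva, hvb]
    rcases fin3_cases a with ha | ha | ha <;> rcases fin3_cases b with hb | hb | hb <;>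
      subst ha <;> subst hb <;> simp <;> omega

private lemma containsDec {n k : ℕ} (p : Equiv.Perm (Fin n)) (f : Fin k → Fin n)
    (hmono : StrictMono f) (hanti : StrictAnti fun m => p (f m)) :
    ContainsPat (Fin.revPerm : Equiv.Perm (Fin k)) p :=
  ⟨f, hmono, fun a b => by
    simpa [Fin.revPerm_apply, Fin.rev_lt_rev] using (hanti.lt_iff_gt (a := a) (b := b)).symm⟩

private lemma strictMono_le' {k n : ℕ} (f : Fin k → Fin n) (hf : StrictMono f) (m : Fin k) :
    (m : ℕ) ≤ (f m : ℕ) := by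
  have key : ∀ v : ℕ, ∀ m : Fin k, (m : ℕ) = v → v ≤ (f m : ℕ) := by
    intro v
    induction v with
    | zero => intro m _; exact Nat.zero_le _
    | succ w ih =>
      intro m hm
      have hw : w < k := by omega
      have h1 := ih ⟨w, hw⟩ rfl
      have h2 : f ⟨w, hw⟩ < f m := hf (by simp [Fin.lt_def, hm])
      have := Fin.lt_def.mp h2
      omega
  exact key _ m rfl

private lemma sumf0 (g : Fin 3 → ℕ) :
    (∑ j ∈ Finset.univ.filter fun j : Fin 3 => (j : ℕ) ≤ 0, g j) + 0 = g 0 := by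
  simp [Finset.sum_filter, Fin.sum_univ_three]

private lemma sumf1 (g : Fin 3 → ℕ) :
    (∑ j ∈ Finset.univ.filter fun j : Fin 3 => (j : ℕ) ≤ 1, g j) + 1 = g 0 + g 1 + 1 := by
  simp [Finset.sum_filter, Fin.sum_univ_three]

private lemma forward_aux {k N a b : ℕ} (hk : 3 ≤ k)
    (p : Equiv.Perm (Fin N))
    (h231 : ¬ ContainsPat p231 p)
    (hdec : ¬ ContainsPat (Fin.revPerm : Equiv.Perm (Fin k)) p)
    (i1 i2 : Fin N) (hv1 : (i1 : ℕ) = a) (hv2 : (i2 : ℕ) = a + b + 1)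
    (hp1 : (p i1 : ℕ) = 1) (hp0 : (p i2 : ℕ) = 0) :
    b = 0 ∧ a ≤ k - 3 := by
  have hNb : a + b + 1 < N := hv2 ▸ i2.2
  have hne0 : ∀ x : Fin N, x ≠ i2 → (p x : ℕ) ≠ 0 := by
    intro x hx h
    exact hx (p.injective (Fin.ext (by rw [h, hp0])))
  have hne1 : ∀ x : Fin N, x ≠ i1 → (p x : ℕ) ≠ 1 := by
    intro x hx h
    exact hx (p.injective (Fin.ext (by rw [h, hp1])))
  have hvne : ∀ x y : Fin N, (x : ℕ) ≠ (y : ℕ) → x ≠ y := by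
    intro x y h hxy; exact h (congrArg Fin.val hxy)
  have hb0 : b = 0 := by
    by_contra h1pos
    obtain ⟨j, hjv⟩ : ∃ j : Fin N, (j : ℕ) = a + 1 := ⟨⟨a + 1, by omega⟩, rfl⟩
    have hj2 : 2 ≤ (p j : ℕ) := by
      have h0 := hne0 j (hvne _ _ (by omega))
      have h1 := hne1 j (hvne _ _ (by omega))
      omega
    exact h231 (contains231 p i1 j i2
      (by rw [Fin.lt_def]; omega) (by rw [Fin.lt_def]; omega)
      (by rw [Fin.lt_def]; omega) (by rw [Fin.lt_def]; omega))
  refine ⟨hb0, ?_⟩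
  subst hb0
  -- the prefix of length a + 2 is strictly decreasing
  have claim : ∀ x y : Fin N, (x : ℕ) < (y : ℕ) → (y : ℕ) ≤ a + 1 →
      (p y : ℕ) < (p x : ℕ) := by
    intro x y hxy hy
    have hx0 : (p x : ℕ) ≠ 0 := hne0 x (hvne _ _ (by omega))
    by_cases hyv : (y : ℕ) = a + 1
    · have hy2 : y = i2 := Fin.ext (by omega)
      rw [hy2, hp0]; omega
    · by_cases hyv2 : (y : ℕ) = a
      · have hy1 : y = i1 := Fin.ext (by omega)
        have hx1 : (p x : ℕ) ≠ 1 := hne1 x (hvne _ _ (by omega))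
        rw [hy1, hp1]; omega
      · by_contra hle
        have hne : (p x : ℕ) ≠ (p y : ℕ) := by
          intro h
          have := congrArg Fin.val (p.injective (Fin.ext h))
          omega
        exact h231 (contains231 p x y i2
          (by rw [Fin.lt_def]; omega)
          (by rw [Fin.lt_def]; omega)
          (by rw [Fin.lt_def]; omega)
          (by rw [Fin.lt_def, hp0]; omega))
  by_contra hg0
  have hk2 : k ≤ a + 2 := by omega
  have hflt : ∀ m : Fin k, (m : ℕ) < N := by
    intro m; have := m.2; omega
  set f : Fin k → Fin N := fun m => ⟨(m : ℕ), hflt m⟩ with hf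
  have hfv : ∀ m : Fin k, ((f m : Fin N) : ℕ) = (m : ℕ) := fun m => rfl
  have hmono : StrictMono f := by
    intro m1 m2 h
    rw [Fin.lt_def, hfv, hfv]; exact Fin.lt_def.mp h
  have hanti : StrictAnti fun m => p (f m) := by
    intro m1 m2 h
    rw [Fin.lt_def]
    refine claim (f m1) (f m2) ?_ ?_
    · rw [hfv, hfv]; exact Fin.lt_def.mp h
    · rw [hfv]; have := m2.2; omega
  exact hdec (containsDec p f hmono hanti)

private lemma backward_aux {k N : ℕ} (hk : 3 ≤ k) {a : ℕ} (ha : a ≤ k - 3)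
    (hbound : a + 2 ≤ N) :
    ¬ ContainsPat p231 (permOf a N hbound) ∧
      ¬ ContainsPat (Fin.revPerm : Equiv.Perm (Fin k)) (permOf a N hbound) := by
  set p : Equiv.Perm (Fin N) := permOf a N hbound with hp
  have hval : ∀ x : Fin N, (p x : ℕ) = fnat a (x : ℕ) := fun x => rfl
  constructor
  · rintro ⟨f, hmono, hiff⟩
    have h01 : p (f 0) < p (f 1) := (hiff 0 1).mp (by
      rw [Fin.lt_def, p231_val, p231_val]; norm_num)
    have h20 : p (f 2) < p (f 0) := (hiff 2 0).mp (by
      rw [Fin.lt_def, p231_val, p231_val]; norm_num; rfl)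
    have hij : ((f 0 : Fin N) : ℕ) < ((f 1 : Fin N) : ℕ) :=
      Fin.lt_def.mp (hmono (by omega))
    have hjl : ((f 1 : Fin N) : ℕ) < ((f 2 : Fin N) : ℕ) :=
      Fin.lt_def.mp (hmono (by omega))
    rw [Fin.lt_def, hval, hval] at h01 h20
    exact fnat_no231 a (f 0) (f 1) (f 2) hij hjl h01 h20
  · rintro ⟨f, hmono, hiff⟩
    have hanti : ∀ m1 m2 : Fin k, m1 < m2 → p (f m2) < p (f m1) := by
      intro m1 m2 h
      exact (hiff m2 m1).mp (by
        simpa [Fin.revPerm_apply, Fin.rev_lt_rev] using h)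
    have hsmall : ∀ m : Fin k, (m : ℕ) + 1 < k → ((f m : Fin N) : ℕ) < a + 2 := by
      intro m hm
      by_contra hge
      push_neg at hge
      have h1 : ((f m : Fin N) : ℕ) < ((f ⟨(m : ℕ) + 1, hm⟩ : Fin N) : ℕ) :=
        Fin.lt_def.mp (hmono (by rw [Fin.lt_def]; simp))
      have h2 := Fin.lt_def.mp (hanti m ⟨(m : ℕ) + 1, hm⟩ (by rw [Fin.lt_def]; simp))
      rw [hval, hval, fnat_big a _ hge, fnat_big a _ (by omega)] at h2
      omega
    have hk2 : k - 2 < k := by omega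
    have hA := hsmall ⟨k - 2, hk2⟩ (by simp; omega)
    have hB := strictMono_le' f hmono ⟨k - 2, hk2⟩
    simp only [Fin.val_mk] at hA hB
    have hfm0 : ((f ⟨k - 2, hk2⟩ : Fin N) : ℕ) = a + 1 := by omega
    have hkm1 : k - 1 < k := by omega
    have hlt := Fin.lt_def.mp (hanti ⟨k - 2, hk2⟩ ⟨k - 1, hkm1⟩
      (by rw [Fin.lt_def]; simp; omega))
    rw [hval, hval, hfm0, fnat_at1] at hlt
    omega

/-- For `k ≥ 3` and `B = {231, k(k−1)⋯21}`, the set `Z(B;21;g)` is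
nonempty if and only if `g₂ = 0` and `g₁ ≤ k − 3` (0-indexed: `g 1 = 0` and
`g 0 ≤ k - 3`); i.e. `G(21) = Av((0,1,0),(k−2,0,0))`. -/
theorem G_of_21_for_231_and_decreasing (k : ℕ) (hk : 3 ≤ k) (g : Fin 3 → ℕ) :
    (ZSet ({⟨3, p231⟩, ⟨k, Fin.revPerm⟩} : Set PermAny)
        (Fin.revPerm : Equiv.Perm (Fin 2)) g).Nonempty ↔
      g 1 = 0 ∧ g 0 ≤ k - 3 := by
  have hS : (∑ j : Fin (2 + 1), g j) = g 0 + g 1 + g 2 := Fin.sum_univ_three g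
  have hsum0 : (∑ j ∈ Finset.univ.filter fun j : Fin (2 + 1) => (j : ℕ) ≤ ((0 : Fin 2) : ℕ), g j)
      + ((0 : Fin 2) : ℕ) = g 0 := by
    show (∑ j ∈ Finset.univ.filter fun j : Fin 3 => (j : ℕ) ≤ 0, g j) + 0 = g 0
    exact sumf0 g
  have hsum1 : (∑ j ∈ Finset.univ.filter fun j : Fin (2 + 1) => (j : ℕ) ≤ ((1 : Fin 2) : ℕ), g j)
      + ((1 : Fin 2) : ℕ) = g 0 + g 1 + 1 := by
    show (∑ j ∈ Finset.univ.filter fun j : Fin 3 => (j : ℕ) ≤ 1, g j) + 1 = g 0 + g 1 + 1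
    exact sumf1 g
  constructor
  · rintro ⟨p, hav, hpos⟩
    have hav231 : ¬ ContainsPat p231 p :=
      hav ⟨3, p231⟩ (Set.mem_insert _ _)
    have havDec : ¬ ContainsPat (Fin.revPerm : Equiv.Perm (Fin k)) p :=
      hav ⟨k, Fin.revPerm⟩ (Set.mem_insert_of_mem _ rfl)
    have hlt1 : g 0 < 2 + ∑ j : Fin (2 + 1), g j := by omega
    have hlt2 : g 0 + g 1 + 1 < 2 + ∑ j : Fin (2 + 1), g j := by omega
    have hp1 := hpos 0 ⟨g 0, hlt1⟩ (by simp only [hsum0])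
    have hp0 := hpos 1 ⟨g 0 + g 1 + 1, hlt2⟩ (by simp only [hsum1])
    rw [show ((Fin.revPerm (0 : Fin 2) : Fin 2) : ℕ) = 1 from rfl] at hp1
    rw [show ((Fin.revPerm (1 : Fin 2) : Fin 2) : ℕ) = 0 from rfl] at hp0
    exact forward_aux hk p hav231 havDec ⟨g 0, hlt1⟩ ⟨g 0 + g 1 + 1, hlt2⟩ rfl rfl hp1 hp0
  · rintro ⟨hg1, hg0⟩
    have hbound : g 0 + 2 ≤ 2 + ∑ j : Fin (2 + 1), g j := by omega
    obtain ⟨hA231, hADec⟩ := backward_aux hk hg0 hbound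
    refine ⟨permOf (g 0) (2 + ∑ j : Fin (2 + 1), g j) hbound, ?_, ?_⟩
    · intro b hb
      rw [Set.mem_insert_iff, Set.mem_singleton_iff] at hb
      rcases hb with rfl | rfl
      · exact hA231
      · exact hADec
    · intro r i hi
      have hr : r = 0 ∨ r = 1 := by omega
      rcases hr with rfl | rfl
      · rw [hsum0] at hi
        show fnat (g 0) (i : ℕ) = 1
        rw [hi]; exact fnat_at (g 0)
      · rw [hsum1, hg1] at hi
        show fnat (g 0) (i : ℕ) = 0
        rw [hi, Nat.add_zero]; exact fnat_at1 (g 0)
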